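/- For the explicit piecewise linear density f, let s_{n,1}, s_{n,2}, s_{n,3} denote the (constant) slopes of f on the intervals J_{n,1} = (a_n, b_n], J_{n,2} = (b_n, c_n], J_{n,3} = (c_n, a_{n+1}] respectively. Then for each i ∈ {1,2,3}, |s_{n,i}| / inf_{x ∈ J_{n,i}} f(x) → 0 as n → ∞. -/

import Mathlib

open MeasureTheory Filter Set

noncomputable section

/-- `a_n = 2^(n²)`. -/
def aSeq (n : ℕ) : ℝ := 2 ^ (n ^ 2)

/-- `m_n` : the least positive integer `k` with `k ≥ (√5/√6)·n`. -/
def mIdx (n : ℕ) : ℕ := max 1 ⌈(Real.sqrt 5 / Real.sqrt 6) * (n : ℝ)⌉₊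

/-- `b_n = a_n + a_{m_n}·(ln (n+1))²`. -/
def bSeq (n : ℕ) : ℝ := aSeq n + aSeq (mIdx n) * (Real.log ((n : ℝ) + 1)) ^ 2

/-- `c_n = (a_{n+1} + b_n)/2`. -/
def cSeq (n : ℕ) : ℝ := (aSeq (n + 1) + bSeq n) / 2

/-- `f` is affine (the linear interpolation of its endpoint values) on `[p, q]`. -/
def AffineOnIcc (f : ℝ → ℝ) (p q : ℝ) : Prop :=
  ∀ x ∈ Set.Icc p q, f x = f p + (x - p) / (q - p) * (f q - f p)

/-- The explicit continuous piecewise linear construction `f₀ : [0,∞) → (0,∞)`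
with `f₀(0) = 1`, `f₀(a_n) = 2 a_n⁻³`, `f₀(b_n) = 2 a_n⁻³ / ln(n+1)`,
`f₀(c_n) = 2 a_n⁻³`, affine on `[0,a₁]`, `[a_n,b_n]`, `[b_n,c_n]`, `[c_n,a_{n+1}]`. -/
def PWConstruction (f₀ : ℝ → ℝ) : Prop :=
  ContinuousOn f₀ (Set.Ici 0) ∧
  (∀ x : ℝ, 0 ≤ x → 0 < f₀ x) ∧
  f₀ 0 = 1 ∧
  (∀ n : ℕ, 1 ≤ n →
    f₀ (aSeq n) = 2 / (aSeq n) ^ 3 ∧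
    f₀ (bSeq n) = 2 / (aSeq n) ^ 3 / Real.log ((n : ℝ) + 1) ∧
    f₀ (cSeq n) = 2 / (aSeq n) ^ 3) ∧
  AffineOnIcc f₀ 0 (aSeq 1) ∧
  (∀ n : ℕ, 1 ≤ n →
    AffineOnIcc f₀ (aSeq n) (bSeq n) ∧
    AffineOnIcc f₀ (bSeq n) (cSeq n) ∧
    AffineOnIcc f₀ (cSeq n) (aSeq (n + 1)))

/-- The normalized extension `f = f₀ / ∫₀^∞ f₀(y) dy`, extended by `0` on `(-∞,0)`. -/
def normExt (f₀ : ℝ → ℝ) : ℝ → ℝ :=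
  fun x => if x < 0 then 0 else f₀ x / ∫ y in Set.Ici (0:ℝ), f₀ y

/-!
On each of the three pieces `f` is affine with positive end values, so its infimum there is the
smaller end value and the normalising constant cancels from `|slope| / inf`. What is left is
explicit. On `[a_n, b_n]` the ratio is `(ln(n+1) - 1) / (a_{m_n} ln(n+1)²) ≤ 1 / a_{m_n}`. On the
other two pieces `b_n ≤ a_{n+1} / 2` makes the interval at least `a_{n+1} / 4` long, which beats the
factor `ln(n+1)` on `[b_n, c_n]` and the factor `(a_{n+1} / a_n)³ = 8 · 64ⁿ` on `[c_n, a_{n+1}]`,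
because `a_n = 2^{n²}` outgrows every exponential.
-/

open scoped Pointwise Topology

def relSlope (g : ℝ → ℝ) (p q : ℝ) : ℝ :=
  |(g q - g p) / (q - p)| / sInf (g '' Ioc p q)

section RelSlope

variable {g h : ℝ → ℝ} {p q : ℝ}

lemma relSlope_nonneg (hg : ∀ x ∈ Ioc p q, 0 ≤ g x) : 0 ≤ relSlope g p q :=
  div_nonneg (abs_nonneg _) (Real.sInf_nonneg (by rintro _ ⟨x, hx, rfl⟩; exact hg x hx))

lemma relSlope_congr (hgh : EqOn g h (Icc p q)) (hpq : p ≤ q) :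
    relSlope g p q = relSlope h p q := by
  unfold relSlope
  rw [hgh (right_mem_Icc.2 hpq), hgh (left_mem_Icc.2 hpq),
    image_congr fun x hx => hgh (Ioc_subset_Icc_self hx)]

lemma relSlope_div_const {c : ℝ} (hc : 0 < c) :
    relSlope (fun x => g x / c) p q = relSlope g p q := by
  have himage : (fun x => g x / c) '' Ioc p q = c⁻¹ • (g '' Ioc p q) := by
    rw [← image_smul, image_image]
    simp only [smul_eq_mul, div_eq_inv_mul]
  have hslope : (g q / c - g p / c) / (q - p) = c⁻¹ * ((g q - g p) / (q - p)) := by ring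
  unfold relSlope
  rw [himage, Real.sInf_smul_of_nonneg (inv_nonneg.2 hc.le), hslope, abs_mul,
    abs_of_pos (inv_pos.2 hc), smul_eq_mul, mul_div_mul_left _ _ (inv_ne_zero hc.ne')]

lemma relSlope_le_of_forall_le (hpq : p < q) {m : ℝ} (hm : 0 < m) (hgm : ∀ x ∈ Ioc p q, m ≤ g x) :
    relSlope g p q ≤ |g q - g p| / ((q - p) * m) := by
  have hinf : m ≤ sInf (g '' Ioc p q) :=
    le_csInf ((nonempty_Ioc.2 hpq).image g) (by rintro _ ⟨x, hx, rfl⟩; exact hgm x hx)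
  calc relSlope g p q = |g q - g p| / (q - p) / sInf (g '' Ioc p q) := by
        rw [relSlope, abs_div, abs_of_pos (sub_pos.2 hpq)]
    _ ≤ |g q - g p| / (q - p) / m :=
        div_le_div_of_nonneg_left (by positivity) hm hinf
    _ = |g q - g p| / ((q - p) * m) := div_div _ _ _

end RelSlope

lemma AffineOnIcc.min_le {f : ℝ → ℝ} {p q : ℝ} (hf : AffineOnIcc f p q) (hpq : p ≤ q) {x : ℝ}
    (hx : x ∈ Icc p q) : min (f p) (f q) ≤ f x := by
  set t := (x - p) / (q - p)
  have ht₀ : 0 ≤ t := div_nonneg (sub_nonneg.2 hx.1) (sub_nonneg.2 hpq)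
  have ht₁ : t ≤ 1 := div_le_one_of_le₀ (by linarith [hx.2]) (sub_nonneg.2 hpq)
  rw [hf x hx]
  nlinarith [min_le_left (f p) (f q), min_le_right (f p) (f q)]

lemma AffineOnIcc.relSlope_le {f : ℝ → ℝ} {p q : ℝ} (hf : AffineOnIcc f p q) (hpq : p < q)
    (hp : 0 < f p) (hq : 0 < f q) :
    relSlope f p q ≤ |f q - f p| / ((q - p) * min (f p) (f q)) :=
  relSlope_le_of_forall_le hpq (lt_min hp hq) fun _ hx => hf.min_le hpq.le (Ioc_subset_Icc_self hx)

lemma abs_div_sub_self_div_mul_min {X L : ℝ} (D : ℝ) (hX : 0 < X) (hL : 1 ≤ L) :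
    |X / L - X| / (D * min X (X / L)) = (L - 1) / D := by
  have hL₀ : 0 < L := one_pos.trans_le hL
  rw [min_eq_right (div_le_self hX.le hL), abs_sub_comm,
    abs_of_nonneg (sub_nonneg.2 (div_le_self hX.le hL))]
  field_simp

lemma one_add_sq_le_four_pow (n : ℕ) : 1 + (n : ℝ) ^ 2 ≤ 4 ^ n := by
  have h : n + 1 ≤ 2 ^ n := Nat.lt_two_pow_self
  have h' : ((n : ℝ) + 1) ^ 2 ≤ (2 ^ n) ^ 2 := by gcongr; exact_mod_cast h
  norm_num [← pow_mul, pow_mul'] at h'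
  nlinarith [n.cast_nonneg (α := ℝ)]

lemma log_succ_pos {n : ℕ} (hn : 1 ≤ n) : 0 < Real.log ((n : ℝ) + 1) :=
  Real.log_pos (by norm_cast; omega)

lemma log_succ_le (n : ℕ) : Real.log ((n : ℝ) + 1) ≤ n := by
  linarith [Real.log_le_sub_one_of_pos (show (0 : ℝ) < n + 1 by positivity)]

lemma one_le_log_succ {n : ℕ} (hn : 2 ≤ n) : 1 ≤ Real.log ((n : ℝ) + 1) := by
  have hn' : (2 : ℝ) ≤ n := by exact_mod_cast hn
  rw [Real.le_log_iff_exp_le (by positivity)]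
  linarith [Real.exp_one_lt_d9]

lemma aSeq_pos (n : ℕ) : 0 < aSeq n := by unfold aSeq; positivity

lemma aSeq_succ (n : ℕ) : aSeq (n + 1) = 2 * 4 ^ n * aSeq n := by
  rw [aSeq, aSeq, show (n + 1) ^ 2 = 1 + 2 * n + n ^ 2 by ring, pow_add, pow_add, pow_mul]
  norm_num

lemma aSeq_mono : Monotone aSeq := fun _ _ h =>
  pow_le_pow_right₀ one_le_two (Nat.pow_le_pow_left h 2)

lemma tendsto_aSeq_atTop : Tendsto aSeq atTop atTop :=
  (tendsto_pow_atTop_atTop_of_one_lt one_lt_two).comp (tendsto_pow_atTop two_ne_zero)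

lemma sq_le_aSeq_succ (n : ℕ) : (n : ℝ) ^ 2 ≤ aSeq (n + 1) := by
  have h₁ : (1 : ℝ) ≤ aSeq n := one_le_pow₀ one_le_two
  have h₄ : (0 : ℝ) < 4 ^ n := by positivity
  rw [aSeq_succ]
  nlinarith [one_add_sq_le_four_pow n]

lemma mIdx_le {n : ℕ} (hn : 1 ≤ n) : mIdx n ≤ n := by
  refine max_le hn (Nat.ceil_le.2 (mul_le_of_le_one_left n.cast_nonneg ?_))
  exact (div_le_one (by positivity)).2 (Real.sqrt_le_sqrt (by norm_num))

lemma tendsto_mIdx_atTop : Tendsto mIdx atTop atTop := by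
  refine tendsto_atTop_mono (fun n => le_max_right 1 _) (tendsto_nat_ceil_atTop.comp ?_)
  exact tendsto_natCast_atTop_atTop.const_mul_atTop (by positivity)

lemma four_mul_mul_sixteen_pow_le_aSeq {n : ℕ} (hn : 6 ≤ n) : 4 * n * 16 ^ n ≤ aSeq n := by
  have h : 4 * n * 16 ^ n ≤ 2 ^ (n ^ 2) :=
    calc 4 * n * 16 ^ n ≤ 4 * 2 ^ n * 16 ^ n := by gcongr; exact Nat.lt_two_pow_self.le
      _ = 2 ^ (5 * n + 2) := by rw [show 16 = 2 ^ 4 by rfl, ← pow_mul]; ring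
      _ ≤ 2 ^ (n ^ 2) := Nat.pow_le_pow_right two_pos (by nlinarith)
  unfold aSeq
  exact_mod_cast h

lemma bSeq_le_half_aSeq_succ {n : ℕ} (hn : 1 ≤ n) : bSeq n ≤ aSeq (n + 1) / 2 := by
  have hlog : aSeq (mIdx n) * Real.log ((n : ℝ) + 1) ^ 2 ≤ aSeq n * (n : ℝ) ^ 2 :=
    mul_le_mul (aSeq_mono (mIdx_le hn)) (pow_le_pow_left₀ (log_succ_pos hn).le (log_succ_le n) 2)
      (by positivity) (aSeq_pos n).le
  have hpow := mul_le_mul_of_nonneg_left (one_add_sq_le_four_pow n) (aSeq_pos n).le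
  rw [bSeq, aSeq_succ]
  linarith

lemma bSeq_pos (n : ℕ) : 0 < bSeq n := by
  rw [bSeq]; have := aSeq_pos n; have := aSeq_pos (mIdx n); positivity

lemma cSeq_pos (n : ℕ) : 0 < cSeq n := by
  rw [cSeq]; have := aSeq_pos (n + 1); have := bSeq_pos n; positivity

lemma aSeq_lt_bSeq {n : ℕ} (hn : 1 ≤ n) : aSeq n < bSeq n := by
  have := mul_pos (aSeq_pos (mIdx n)) (pow_pos (log_succ_pos hn) 2)
  rw [bSeq]
  linarith

lemma aSeq_succ_div_four_le_cSeq_sub_bSeq {n : ℕ} (hn : 1 ≤ n) :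
    aSeq (n + 1) / 4 ≤ cSeq n - bSeq n := by
  rw [cSeq]; linarith [bSeq_le_half_aSeq_succ hn]

lemma aSeq_succ_div_four_le_aSeq_succ_sub_cSeq {n : ℕ} (hn : 1 ≤ n) :
    aSeq (n + 1) / 4 ≤ aSeq (n + 1) - cSeq n := by
  rw [cSeq]; linarith [bSeq_le_half_aSeq_succ hn]

lemma bSeq_lt_cSeq {n : ℕ} (hn : 1 ≤ n) : bSeq n < cSeq n := by
  linarith [aSeq_succ_div_four_le_cSeq_sub_bSeq hn, aSeq_pos (n + 1)]

lemma cSeq_lt_aSeq_succ {n : ℕ} (hn : 1 ≤ n) : cSeq n < aSeq (n + 1) := by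
  linarith [aSeq_succ_div_four_le_aSeq_succ_sub_cSeq hn, aSeq_pos (n + 1)]

section Pieces

variable {f₀ : ℝ → ℝ} {n : ℕ}

lemma relSlope_aSeq_bSeq_le (hf₀ : PWConstruction f₀) (hn : 2 ≤ n) :
    relSlope f₀ (aSeq n) (bSeq n) ≤ (aSeq (mIdx n))⁻¹ := by
  obtain ⟨-, hpos, -, hvals, -, haff⟩ := hf₀
  have hn₁ : 1 ≤ n := by omega
  have hab := aSeq_lt_bSeq hn₁
  have ha₀ := aSeq_pos n
  have hm₀ := aSeq_pos (mIdx n)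
  obtain ⟨ha, hb, -⟩ := hvals n hn₁
  have hL := one_le_log_succ hn
  set L := Real.log ((n : ℝ) + 1)
  calc relSlope f₀ (aSeq n) (bSeq n)
      ≤ |f₀ (bSeq n) - f₀ (aSeq n)| / ((bSeq n - aSeq n) * min (f₀ (aSeq n)) (f₀ (bSeq n))) :=
        (haff n hn₁).1.relSlope_le hab (hpos _ ha₀.le) (hpos _ (ha₀.trans hab).le)
    _ = (L - 1) / (aSeq (mIdx n) * L ^ 2) := by
        rw [ha, hb, abs_div_sub_self_div_mul_min _ (by positivity) hL, bSeq, add_sub_cancel_left]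
    _ ≤ (aSeq (mIdx n))⁻¹ := by
        rw [div_le_iff₀ (by positivity), inv_mul_cancel_left₀ hm₀.ne']
        nlinarith

lemma relSlope_bSeq_cSeq_le (hf₀ : PWConstruction f₀) (hn : 2 ≤ n) :
    relSlope f₀ (bSeq n) (cSeq n) ≤ 4 / n := by
  obtain ⟨-, hpos, -, hvals, -, haff⟩ := hf₀
  have hn₁ : 1 ≤ n := by omega
  have hbc := bSeq_lt_cSeq hn₁
  have ha₀ := aSeq_pos n
  have hb₀ := ha₀.trans (aSeq_lt_bSeq hn₁)
  obtain ⟨-, hb, hc⟩ := hvals n hn₁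
  have hn₀ : (0 : ℝ) < n := Nat.cast_pos.2 (by omega)
  have hgap : (n : ℝ) ^ 2 / 4 ≤ cSeq n - bSeq n := by
    linarith [aSeq_succ_div_four_le_cSeq_sub_bSeq hn₁, sq_le_aSeq_succ n]
  calc relSlope f₀ (bSeq n) (cSeq n)
      ≤ |f₀ (cSeq n) - f₀ (bSeq n)| / ((cSeq n - bSeq n) * min (f₀ (bSeq n)) (f₀ (cSeq n))) :=
        (haff n hn₁).2.1.relSlope_le hbc (hpos _ hb₀.le) (hpos _ (hb₀.trans hbc).le)
    _ = (Real.log ((n : ℝ) + 1) - 1) / (cSeq n - bSeq n) := by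
        rw [hb, hc, abs_sub_comm, min_comm,
          abs_div_sub_self_div_mul_min _ (by positivity) (one_le_log_succ hn)]
    _ ≤ n / ((n : ℝ) ^ 2 / 4) :=
        div_le_div₀ hn₀.le (by linarith [log_succ_le n]) (by positivity) hgap
    _ = 4 / n := by field_simp

lemma relSlope_cSeq_aSeq_succ_le (hf₀ : PWConstruction f₀) (hn : 6 ≤ n) :
    relSlope f₀ (cSeq n) (aSeq (n + 1)) ≤ 4 / n := by
  obtain ⟨-, hpos, -, hvals, -, haff⟩ := hf₀
  have hn₁ : 1 ≤ n := by omega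
  have hca := cSeq_lt_aSeq_succ hn₁
  have ha₀ := aSeq_pos n
  have hc₀ := ha₀.trans ((aSeq_lt_bSeq hn₁).trans (bSeq_lt_cSeq hn₁))
  have hn₀ : (0 : ℝ) < n := Nat.cast_pos.2 (by omega)
  obtain ⟨-, -, hc⟩ := hvals n hn₁
  have ha' := (hvals (n + 1) (by omega)).1
  have hX' : 2 / aSeq (n + 1) ^ 3 ≤ 2 / aSeq n ^ 3 := by
    gcongr; exact aSeq_mono n.le_succ
  calc relSlope f₀ (cSeq n) (aSeq (n + 1))
      ≤ |f₀ (aSeq (n + 1)) - f₀ (cSeq n)| /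
          ((aSeq (n + 1) - cSeq n) * min (f₀ (cSeq n)) (f₀ (aSeq (n + 1)))) :=
        (haff n hn₁).2.2.relSlope_le hca (hpos _ hc₀.le) (hpos _ (hc₀.trans hca).le)
    _ ≤ 2 / aSeq n ^ 3 / ((aSeq (n + 1) - cSeq n) * (2 / aSeq (n + 1) ^ 3)) := by
        rw [ha', hc, min_eq_right hX', abs_sub_comm, abs_of_nonneg (sub_nonneg.2 hX')]
        have ha'₀ := aSeq_pos (n + 1)
        exact div_le_div_of_nonneg_right (sub_le_self _ (by positivity))
          (mul_pos (sub_pos.2 hca) (by positivity)).le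
    _ = (2 * 4 ^ n) ^ 3 / (aSeq (n + 1) - cSeq n) := by
        rw [aSeq_succ n]; field_simp
    _ ≤ (2 * 4 ^ n) ^ 3 / (2 * 4 ^ n * aSeq n / 4) := by
        gcongr; rw [← aSeq_succ]; exact aSeq_succ_div_four_le_aSeq_succ_sub_cSeq hn₁
    _ = 16 * 16 ^ n / aSeq n := by
        rw [show (16 : ℝ) ^ n = (4 ^ n) ^ 2 by rw [← pow_mul, mul_comm, pow_mul]; norm_num]
        field_simp; ring
    _ ≤ 4 / n := by
        rw [div_le_div_iff₀ ha₀ hn₀]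
        linarith [four_mul_mul_sixteen_pow_le_aSeq hn]

end Pieces

section NormExt

variable {f₀ : ℝ → ℝ}

lemma normExt_eqOn :
    EqOn (normExt f₀) (fun x => f₀ x / ∫ y in Ici (0 : ℝ), f₀ y) (Ici 0) :=
  fun _ hx => if_neg (not_lt.2 hx)

lemma normExt_nonneg (hf₀ : ∀ x, 0 ≤ x → 0 ≤ f₀ x) (x : ℝ) : 0 ≤ normExt f₀ x := by
  unfold normExt
  split_ifs with hx
  · exact le_rfl
  · exact div_nonneg (hf₀ x (not_lt.1 hx)) (setIntegral_nonneg measurableSet_Ici hf₀)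

lemma relSlope_normExt_le (hf₀ : ∀ x, 0 ≤ x → 0 ≤ f₀ x) {p q : ℝ} (hp : 0 ≤ p) (hpq : p ≤ q) :
    relSlope (normExt f₀) p q ≤ relSlope f₀ p q := by
  rw [relSlope_congr (normExt_eqOn.mono (Icc_subset_Ici_iff hpq |>.2 hp)) hpq]
  have hI₀ : 0 ≤ ∫ y in Ici (0 : ℝ), f₀ y := setIntegral_nonneg measurableSet_Ici hf₀
  -- If the integral is `0` (e.g. the junk value for non-integrable `f₀`), `normExt f₀` vanishes.
  rcases hI₀.eq_or_lt with hI | hI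
  · calc relSlope (fun x => f₀ x / ∫ y in Ici (0 : ℝ), f₀ y) p q = 0 := by
          simp [relSlope, ← hI]
      _ ≤ relSlope f₀ p q := relSlope_nonneg fun x hx => hf₀ x (hp.trans hx.1.le)
  · rw [relSlope_div_const hI]

lemma tendsto_relSlope_normExt (hf₀ : ∀ x, 0 ≤ x → 0 ≤ f₀ x) {p q u : ℕ → ℝ}
    (h : ∀ᶠ n in atTop, 0 ≤ p n ∧ p n ≤ q n ∧ relSlope f₀ (p n) (q n) ≤ u n)
    (hu : Tendsto u atTop (𝓝 0)) :
    Tendsto (fun n => relSlope (normExt f₀) (p n) (q n)) atTop (𝓝 0) :=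
  squeeze_zero' (Eventually.of_forall fun _ => relSlope_nonneg fun x _ => normExt_nonneg hf₀ x)
    (h.mono fun _ ⟨hp, hpq, hle⟩ => (relSlope_normExt_le hf₀ hp hpq).trans hle) hu

end NormExt

theorem pw_density_slopes_negligible (f₀ : ℝ → ℝ)
    (hf₀ : PWConstruction f₀) (f : ℝ → ℝ) (hf : f = normExt f₀) :
    Tendsto (fun n : ℕ =>
        |(f (bSeq n) - f (aSeq n)) / (bSeq n - aSeq n)| /
          sInf (f '' Set.Ioc (aSeq n) (bSeq n))) atTop (nhds 0) ∧
    Tendsto (fun n : ℕ =>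
        |(f (cSeq n) - f (bSeq n)) / (cSeq n - bSeq n)| /
          sInf (f '' Set.Ioc (bSeq n) (cSeq n))) atTop (nhds 0) ∧
    Tendsto (fun n : ℕ =>
        |(f (aSeq (n + 1)) - f (cSeq n)) / (aSeq (n + 1) - cSeq n)| /
          sInf (f '' Set.Ioc (cSeq n) (aSeq (n + 1)))) atTop (nhds 0) := by
  subst hf
  have hnonneg : ∀ x, 0 ≤ x → 0 ≤ f₀ x := fun x hx => (hf₀.2.1 x hx).le
  have hinv : Tendsto (fun n => (aSeq (mIdx n))⁻¹) atTop (𝓝 0) :=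
    tendsto_inv_atTop_zero.comp (tendsto_aSeq_atTop.comp tendsto_mIdx_atTop)
  have hdiv : Tendsto (fun n : ℕ => (4 : ℝ) / n) atTop (𝓝 0) :=
    tendsto_const_div_atTop_nhds_zero_nat 4
  refine ⟨tendsto_relSlope_normExt hnonneg ?_ hinv, tendsto_relSlope_normExt hnonneg ?_ hdiv,
    tendsto_relSlope_normExt hnonneg ?_ hdiv⟩
  · filter_upwards [eventually_ge_atTop 2] with n hn
    exact ⟨(aSeq_pos n).le, (aSeq_lt_bSeq (by omega)).le, relSlope_aSeq_bSeq_le hf₀ hn⟩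
  · filter_upwards [eventually_ge_atTop 2] with n hn
    exact ⟨(bSeq_pos n).le, (bSeq_lt_cSeq (by omega)).le, relSlope_bSeq_cSeq_le hf₀ hn⟩
  · filter_upwards [eventually_ge_atTop 6] with n hn
    exact ⟨(cSeq_pos n).le, (cSeq_lt_aSeq_succ (by omega)).le, relSlope_cSeq_aSeq_succ_le hf₀ hn⟩
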